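/- arXiv:2002.11417 — 7 statements merged into one kernel-verified Lean document; each statement's English description precedes it below -/
import Mathlib

section
/- The function ξ(x) = G(x/2)/G(1-x/2), where G(x) = ∏_{n≥0} (2/√3) sin(π a^n(x)/2) and a(x) = 1 - x/2, is continuously differentiable, strictly increasing, and a bijection from [0,1] onto [0,1]. -/
open Real Set

/-!
Put `logG y = ∑ₙ log S(aⁿ y)`, so that `G = exp ∘ logG` on `(0, 1]`. Peeling off the first factor,
`G(x/2) = S(x/2) G(1 - x/4)`, turns `ξ` into `S(x/2) exp(logG(1 - x/4) - logG(1 - x/2))`, which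
only evaluates `logG` near `[1/2, 1]`. Since `aⁿ y = 2/3 + (-1/2)ⁿ (y - 2/3)`, the series may be
differentiated termwise there, giving the continuous derivative
`P y := dlogG y = ∑ₙ (-1/2)ⁿ ψ(aⁿ y)` with `ψ = (log S)' = (π/2) cot(π · /2)`; hence `ξ` is `C¹`.

Because `(-1/2)ⁿ` is both the factor and the slope of `aⁿ`, every term of `P` is antitone on
`(0, 1]` (the first strictly), so `P` is strictly decreasing there. On `(0, 1)`,
`ξ' = ξ (P(x/2) + P(1 - x/2)) / 2 ≥ ξ (P(1/2) + P(1)) / 2`, and the shift identity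
`P 1 = ψ 1 - P(1/2)/2 = -P(1/2)/2` together with `P 1 < P(1/2)` makes this positive. With
`ξ 0 = 0` and `ξ 1 = 1`, strict monotonicity and continuity give the bijection.
-/

theorem Function.iterate_affine {R : Type*} [CommRing R] {f : R → R} {p r : R}
    (hf : ∀ x, f x = p + r * (x - p)) (n : ℕ) (x : R) : f^[n] x = p + r ^ n * (x - p) := by
  induction n with
  | zero => simp
  | succ n ih => rw [Function.iterate_succ_apply', ih, hf, pow_succ]; ring

theorem AntitoneOn.mul_comp_affine {φ : ℝ → ℝ} {s t : Set ℝ} (hφ : AntitoneOn φ t) {c p : ℝ}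
    (hst : MapsTo (fun y => p + c * (y - p)) s t) :
    AntitoneOn (fun y => c * φ (p + c * (y - p))) s := by
  intro u hu v hv huv
  rcases le_total 0 c with hc | hc
  · exact mul_le_mul_of_nonneg_left (hφ (hst hu) (hst hv) (by nlinarith)) hc
  · exact mul_le_mul_of_nonpos_left (hφ (hst hv) (hst hu) (by nlinarith)) hc

theorem StrictMonoOn.bijOn_Icc {α δ : Type*} [TopologicalSpace α]
    [ConditionallyCompleteLinearOrder α] [OrderTopology α] [DenselyOrdered α] [LinearOrder δ]
    [TopologicalSpace δ] [OrderClosedTopology δ] {f : α → δ} {a b : α} (hab : a ≤ b)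
    (hf : StrictMonoOn f (Icc a b)) (hf' : ContinuousOn f (Icc a b)) :
    BijOn f (Icc a b) (Icc (f a) (f b)) := by
  have ha : a ∈ Icc a b := left_mem_Icc.2 hab
  have hb : b ∈ Icc a b := right_mem_Icc.2 hab
  refine ⟨fun x hx => ⟨?_, ?_⟩, hf.injOn, intermediate_value_Icc hab hf'⟩
  · exact hf.monotoneOn ha hx hx.1
  · exact hf.monotoneOn hx hb hx.2

theorem contDiffOn_one_of_hasDerivAt {f f' : ℝ → ℝ} {s : Set ℝ} (hs : IsOpen s)
    (hf : ∀ x ∈ s, HasDerivAt f (f' x) x) (hf' : ContinuousOn f' s) : ContDiffOn ℝ 1 f s := by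
  rw [show (1 : WithTop ℕ∞) = 0 + 1 from rfl, contDiffOn_succ_iff_deriv_of_isOpen hs]
  refine ⟨fun x hx => (hf x hx).differentiableAt.differentiableWithinAt, by simp, ?_⟩
  exact contDiffOn_zero.2 (hf'.congr fun x hx => (hf x hx).deriv)

theorem Real.one_half_le_sin {θ : ℝ} (h₁ : π / 6 ≤ θ) (h₂ : θ ≤ 5 * π / 6) : 1 / 2 ≤ sin θ := by
  rw [← sin_pi_div_six]
  rcases le_total θ (π / 2) with h | h
  · exact sin_le_sin_of_le_of_le_pi_div_two (by linarith [pi_pos]) h h₁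
  · rw [← sin_pi_sub θ]
    exact sin_le_sin_of_le_of_le_pi_div_two (by linarith [pi_pos]) (by linarith) (by linarith)

namespace SineProduct

noncomputable def a (x : ℝ) : ℝ := 1 - x / 2

noncomputable def S (x : ℝ) : ℝ := 2 / √3 * sin (π * x / 2)

noncomputable def ψ (t : ℝ) : ℝ := π / 2 * (cos (π * t / 2) / sin (π * t / 2))

noncomputable def logG (y : ℝ) : ℝ := ∑' n, log (S (a^[n] y))

noncomputable def dlogG (y : ℝ) : ℝ := ∑' n, (-1 / 2) ^ n * ψ (a^[n] y)

-- `G (x / 2) / G (1 - x / 2)` after `G (x / 2) = S (x / 2) * G (1 - x / 4)`; unlike the quotient,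
-- this is smooth across `x = 0`, where `G` vanishes
noncomputable def xi (x : ℝ) : ℝ := S (x / 2) * exp (logG (1 - x / 4) - logG (1 - x / 2))

theorem iterate_a (n : ℕ) (x : ℝ) : a^[n] x = 2 / 3 + (-1 / 2) ^ n * (x - 2 / 3) :=
  Function.iterate_affine (fun x => by unfold a; ring) n x

theorem mapsTo_a_Ioc : MapsTo a (Ioc 0 1) (Ioc 0 1) :=
  fun x hx => by constructor <;> unfold a <;> linarith [hx.1, hx.2]

-- `a` maps `J` into itself and `|ψ| ≤ π` on `J`, so `logG` can be differentiated termwise on `J`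
local notation "J" => Ioo (1 / 3 : ℝ) (4 / 3)

theorem mapsTo_a_J : MapsTo a J J :=
  fun x hx => by constructor <;> unfold a <;> linarith [hx.1, hx.2]

theorem mem_Ioo_of_mem_J {t : ℝ} (ht : t ∈ J) : t ∈ Ioo 0 2 :=
  ⟨by linarith [ht.1], by linarith [ht.2]⟩

theorem mem_Ioo_of_mem_Ioc {t : ℝ} (ht : t ∈ Ioc 0 1) : t ∈ Ioo 0 2 :=
  ⟨ht.1, by linarith [ht.2]⟩

theorem a_mem_J {y : ℝ} (hy : y ∈ Ioc 0 1) : a y ∈ J := by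
  constructor <;> unfold a <;> linarith [hy.1, hy.2]

theorem sin_pi_mul_div_two_pos {t : ℝ} (ht : t ∈ Ioo 0 2) : 0 < sin (π * t / 2) :=
  sin_pos_of_pos_of_lt_pi (by nlinarith [ht.1, pi_pos]) (by nlinarith [ht.2, pi_pos])

theorem S_pos {t : ℝ} (ht : t ∈ Ioo 0 2) : 0 < S t :=
  mul_pos (by positivity) (sin_pi_mul_div_two_pos ht)

theorem S_two_thirds : S (2 / 3) = 1 := by
  rw [S, show π * (2 / 3) / 2 = π / 3 by ring, sin_pi_div_three]
  field_simp

theorem hasDerivAt_S {t : ℝ} (ht : t ∈ Ioo 0 2) : HasDerivAt S (S t * ψ t) t := by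
  have h := (((hasDerivAt_id' t).const_mul π).div_const 2).sin.const_mul (2 / √3)
  refine h.congr_deriv ?_
  have := (sin_pi_mul_div_two_pos ht).ne'
  simp only [S, ψ]
  field_simp

theorem hasDerivAt_log_S {t : ℝ} (ht : t ∈ Ioo 0 2) : HasDerivAt (fun t => log (S t)) (ψ t) t := by
  convert (hasDerivAt_S ht).log (S_pos ht).ne' using 1
  field_simp [(S_pos ht).ne']

theorem ψ_one : ψ 1 = 0 := by
  simp [ψ]

theorem continuousOn_ψ : ContinuousOn ψ (Ioo 0 2) := by
  refine continuousOn_const.mul (ContinuousOn.div (by fun_prop) (by fun_prop) fun t ht => ?_)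
  exact (sin_pi_mul_div_two_pos ht).ne'

theorem abs_ψ_le {t : ℝ} (ht : t ∈ J) : |ψ t| ≤ π := by
  have hsin : 1 / 2 ≤ sin (π * t / 2) :=
    one_half_le_sin (by nlinarith [ht.1, pi_pos]) (by nlinarith [ht.2, pi_pos])
  have hcot : |cos (π * t / 2) / sin (π * t / 2)| ≤ 2 := by
    rw [abs_div, abs_of_pos (show 0 < sin (π * t / 2) by linarith), div_le_iff₀ (by linarith)]
    linarith [abs_cos_le_one (π * t / 2)]
  rw [ψ, abs_mul, abs_of_pos (by positivity)]
  nlinarith [pi_pos]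

theorem strictAntiOn_ψ : StrictAntiOn ψ (Ioc 0 1) := by
  intro t ht u hu htu
  have hpi := pi_pos
  have hst : 0 < sin (π * t / 2) := sin_pi_mul_div_two_pos ⟨ht.1, by linarith [ht.2]⟩
  have hcu : 0 ≤ cos (π * u / 2) := cos_nonneg_of_mem_Icc ⟨by nlinarith [hu.1], by nlinarith [hu.2]⟩
  have hcos : cos (π * u / 2) < cos (π * t / 2) :=
    cos_lt_cos_of_nonneg_of_le_pi (by nlinarith [ht.1]) (by nlinarith [hu.2]) (by nlinarith)
  have hsin : sin (π * t / 2) ≤ sin (π * u / 2) :=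
    sin_le_sin_of_le_of_le_pi_div_two (by nlinarith [ht.1]) (by nlinarith [hu.2]) (by nlinarith)
  have hcot : cos (π * u / 2) / sin (π * u / 2) < cos (π * t / 2) / sin (π * t / 2) := by
    rw [div_lt_div_iff₀ (by linarith) hst]
    nlinarith
  simp only [ψ]
  gcongr

theorem hasDerivAt_log_S_iterate {y : ℝ} (hy : y ∈ J) (n : ℕ) :
    HasDerivAt (fun z => log (S (a^[n] z))) ((-1 / 2) ^ n * ψ (a^[n] y)) y := by
  have hin : HasDerivAt (fun z => a^[n] z) ((-1 / 2) ^ n) y := by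
    simp_rw [iterate_a]
    simpa using
      (((hasDerivAt_id' y).sub_const (2 / 3)).const_mul ((-1 / 2 : ℝ) ^ n)).const_add (2 / 3)
  have hout := hasDerivAt_log_S (mem_Ioo_of_mem_J (mapsTo_a_J.iterate n hy))
  exact (hout.comp y hin).congr_deriv (mul_comm _ _)

theorem norm_dlogG_term_le {y : ℝ} (hy : y ∈ J) (n : ℕ) :
    ‖(-1 / 2 : ℝ) ^ n * ψ (a^[n] y)‖ ≤ π * (1 / 2) ^ n := by
  rw [norm_mul, norm_pow, norm_div, norm_neg, norm_one, Real.norm_two, Real.norm_eq_abs, mul_comm]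
  exact mul_le_mul_of_nonneg_right (abs_ψ_le (mapsTo_a_J.iterate n hy)) (by positivity)

theorem summable_log_S_iterate_of_mem_J {y : ℝ} (hy : y ∈ J) :
    Summable fun n => log (S (a^[n] y)) := by
  have h₀ : Summable fun n => log (S (a^[n] (2 / 3))) := by
    simp [Function.iterate_fixed (show a (2 / 3) = 2 / 3 by norm_num [a]), S_two_thirds]
  exact summable_of_summable_hasDerivAt_of_isPreconnected
    (g := fun n z => log (S (a^[n] z))) (summable_geometric_two.mul_left π)
    isOpen_Ioo isPreconnected_Ioo (fun n _ hz => hasDerivAt_log_S_iterate hz n)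
    (fun n _ hz => norm_dlogG_term_le hz n) (⟨by norm_num, by norm_num⟩ : (2 / 3 : ℝ) ∈ J) h₀ hy

theorem hasDerivAt_logG {y : ℝ} (hy : y ∈ J) : HasDerivAt logG (dlogG y) y :=
  hasDerivAt_tsum_of_isPreconnected (summable_geometric_two.mul_left π) isOpen_Ioo
    isPreconnected_Ioo (fun n _ hz => hasDerivAt_log_S_iterate hz n)
    (fun n _ hz => norm_dlogG_term_le hz n) hy (summable_log_S_iterate_of_mem_J hy) hy

theorem summable_dlogG_term_of_mem_J {y : ℝ} (hy : y ∈ J) :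
    Summable fun n => (-1 / 2 : ℝ) ^ n * ψ (a^[n] y) :=
  Summable.of_norm_bounded (summable_geometric_two.mul_left π) (norm_dlogG_term_le hy)

theorem continuousOn_dlogG : ContinuousOn dlogG J := by
  have ha : Continuous a := by unfold a; fun_prop
  refine continuousOn_tsum (fun n => continuousOn_const.mul ?_) (summable_geometric_two.mul_left π)
    fun n y hy => norm_dlogG_term_le hy n
  exact continuousOn_ψ.comp (ha.iterate n).continuousOn
    fun y hy => mem_Ioo_of_mem_J (mapsTo_a_J.iterate n hy)

theorem contDiffOn_logG : ContDiffOn ℝ 1 logG J :=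
  contDiffOn_one_of_hasDerivAt isOpen_Ioo (fun _ hy => hasDerivAt_logG hy) continuousOn_dlogG

theorem summable_log_S_iterate {y : ℝ} (hy : a y ∈ J) : Summable fun n => log (S (a^[n] y)) :=
  (summable_nat_add_iff 1).1 <| by
    simpa only [Function.iterate_succ_apply] using summable_log_S_iterate_of_mem_J hy

theorem logG_eq_log_S_add {y : ℝ} (hy : a y ∈ J) : logG y = log (S y) + logG (a y) := by
  rw [logG, (summable_log_S_iterate hy).tsum_eq_zero_add]
  simp only [Function.iterate_succ_apply, Function.iterate_zero_apply, logG]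

theorem summable_dlogG_term {y : ℝ} (hy : a y ∈ J) :
    Summable fun n => (-1 / 2 : ℝ) ^ n * ψ (a^[n] y) :=
  (summable_nat_add_iff 1).1 <| ((summable_dlogG_term_of_mem_J hy).mul_left (-1 / 2)).congr
    fun n => by rw [Function.iterate_succ_apply, pow_succ]; ring

theorem dlogG_eq_ψ_sub {y : ℝ} (hy : a y ∈ J) : dlogG y = ψ y - dlogG (a y) / 2 := by
  have htail : ∑' n, (-1 / 2 : ℝ) ^ (n + 1) * ψ (a^[n + 1] y) = -1 / 2 * dlogG (a y) := by
    rw [dlogG, ← tsum_mul_left]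
    exact tsum_congr fun n => by rw [Function.iterate_succ_apply, pow_succ]; ring
  rw [dlogG, (summable_dlogG_term hy).tsum_eq_zero_add, htail]
  simp only [pow_zero, one_mul, Function.iterate_zero_apply]
  ring

theorem hasProd_S_iterate {y : ℝ} (hy : y ∈ Ioc 0 1) :
    HasProd (fun n => S (a^[n] y)) (exp (logG y)) := by
  have h : HasProd (exp ∘ fun n => log (S (a^[n] y))) (exp (logG y)) :=
    (summable_log_S_iterate (a_mem_J hy)).hasSum.rexp
  convert h using 1
  funext n
  exact (exp_log (S_pos (mem_Ioo_of_mem_Ioc (mapsTo_a_Ioc.iterate n hy)))).symm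

theorem strictAntiOn_dlogG : StrictAntiOn dlogG (Ioc 0 1) := by
  intro u hu v hv huv
  have hterm (n : ℕ) : AntitoneOn (fun y => (-1 / 2 : ℝ) ^ n * ψ (a^[n] y)) (Ioc 0 1) := by
    simp_rw [iterate_a]
    refine strictAntiOn_ψ.antitoneOn.mul_comp_affine fun y hy => ?_
    simpa only [iterate_a] using mapsTo_a_Ioc.iterate n hy
  refine Summable.tsum_lt_tsum (i := 0) (fun n => hterm n hu hv huv.le) ?_
    (summable_dlogG_term (a_mem_J hv)) (summable_dlogG_term (a_mem_J hu))
  simpa using strictAntiOn_ψ hu hv huv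

theorem dlogG_one : dlogG 1 = -dlogG (1 / 2) / 2 := by
  rw [dlogG_eq_ψ_sub (a_mem_J ⟨one_pos, le_rfl⟩), ψ_one, show a 1 = 1 / 2 by norm_num [a]]
  ring

theorem dlogG_half_pos : 0 < dlogG (1 / 2) := by
  have h : dlogG 1 < dlogG (1 / 2) :=
    strictAntiOn_dlogG ⟨by norm_num, by norm_num⟩ ⟨one_pos, le_rfl⟩ (by norm_num)
  linarith [dlogG_one]

theorem dlogG_add_dlogG_pos {x : ℝ} (hx : x ∈ Ioo 0 1) :
    0 < dlogG (x / 2) + dlogG (1 - x / 2) := by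
  have h₁ : dlogG (1 / 2) ≤ dlogG (x / 2) :=
    strictAntiOn_dlogG.antitoneOn ⟨by linarith [hx.1], by linarith [hx.2]⟩
      ⟨by norm_num, by norm_num⟩ (by linarith [hx.2])
  have h₂ : dlogG 1 ≤ dlogG (1 - x / 2) :=
    strictAntiOn_dlogG.antitoneOn ⟨by linarith [hx.2], by linarith [hx.1]⟩ ⟨one_pos, le_rfl⟩
      (by linarith [hx.1])
  linarith [dlogG_one, dlogG_half_pos]

theorem contDiffOn_xi : ContDiffOn ℝ 1 xi (Icc 0 1) := by
  have hS : ContDiff ℝ 1 fun x => S (x / 2) := by unfold S; fun_prop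
  have h₁ : ContDiffOn ℝ 1 (fun x => logG (1 - x / 4)) (Icc 0 1) :=
    contDiffOn_logG.comp (by fun_prop : ContDiff ℝ 1 fun x : ℝ => 1 - x / 4).contDiffOn
      fun x hx => ⟨by linarith [hx.2], by linarith [hx.1]⟩
  have h₂ : ContDiffOn ℝ 1 (fun x => logG (1 - x / 2)) (Icc 0 1) :=
    contDiffOn_logG.comp (by fun_prop : ContDiff ℝ 1 fun x : ℝ => 1 - x / 2).contDiffOn
      fun x hx => ⟨by linarith [hx.2], by linarith [hx.1]⟩
  exact hS.contDiffOn.mul (h₁.sub h₂).exp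

theorem hasDerivAt_xi {x : ℝ} (hx : x ∈ Ioo 0 1) :
    HasDerivAt xi (xi x * ((dlogG (x / 2) + dlogG (1 - x / 2)) / 2)) x := by
  have hS := (hasDerivAt_S ⟨by linarith [hx.1], by linarith [hx.2]⟩).comp x
    ((hasDerivAt_id' x).div_const 2)
  have h₁ := (hasDerivAt_logG ⟨by linarith [hx.2], by linarith [hx.1]⟩).comp x
    (((hasDerivAt_id' x).div_const 4).const_sub 1)
  have h₂ := (hasDerivAt_logG ⟨by linarith [hx.2], by linarith [hx.1]⟩).comp x
    (((hasDerivAt_id' x).div_const 2).const_sub 1)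
  refine (hS.mul (h₁.sub h₂).exp).congr_deriv ?_
  simp only [Function.comp_apply, Pi.sub_apply]
  have ha : a (x / 2) = 1 - x / 4 := by unfold a; ring
  rw [xi, dlogG_eq_ψ_sub (y := x / 2) (ha ▸ ⟨by linarith [hx.2], by linarith [hx.1]⟩), ha]
  ring

theorem xi_pos {x : ℝ} (hx : x ∈ Ioo 0 1) : 0 < xi x :=
  mul_pos (S_pos ⟨by linarith [hx.1], by linarith [hx.2]⟩) (exp_pos _)

theorem strictMonoOn_xi : StrictMonoOn xi (Icc 0 1) := by
  refine strictMonoOn_of_deriv_pos (convex_Icc 0 1) contDiffOn_xi.continuousOn fun x hx => ?_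
  rw [interior_Icc] at hx
  rw [(hasDerivAt_xi hx).deriv]
  exact mul_pos (xi_pos hx) (half_pos (dlogG_add_dlogG_pos hx))

theorem xi_eq_exp_div_exp {x : ℝ} (hx : x ∈ Ioc 0 1) :
    xi x = exp (logG (x / 2)) / exp (logG (1 - x / 2)) := by
  unfold xi
  have ha : a (x / 2) = 1 - x / 4 := by unfold a; ring
  rw [logG_eq_log_S_add (y := x / 2) (ha ▸ ⟨by linarith [hx.2], by linarith [hx.1]⟩), ha, exp_add,
    exp_log (S_pos ⟨by linarith [hx.1], by linarith [hx.2]⟩), exp_sub, mul_div_assoc]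

theorem xi_zero : xi 0 = 0 := by
  simp [xi, S]

theorem xi_one : xi 1 = 1 := by
  rw [xi_eq_exp_div_exp ⟨one_pos, le_rfl⟩, show (1 : ℝ) - 1 / 2 = 1 / 2 by norm_num]
  exact div_self (exp_ne_zero _)

theorem eqOn_div_xi {G : ℝ → ℝ} (hG₀ : G 0 = 0) (hG : ∀ y ∈ Ioc 0 1, G y = exp (logG y)) :
    EqOn (fun x => G (x / 2) / G (1 - x / 2)) xi (Icc 0 1) := by
  rintro x ⟨hx₀, hx₁⟩
  rcases hx₀.eq_or_lt with rfl | hx₀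
  · simp [hG₀, xi_zero]
  · dsimp only
    rw [xi_eq_exp_div_exp ⟨hx₀, hx₁⟩, hG _ ⟨by linarith, by linarith⟩,
      hG _ ⟨by linarith, by linarith⟩]

end SineProduct

/-- ξ(x) = G(x/2)/G(1-x/2), with G(x) = ∏_{n≥0} (2/√3) sin(π a^n(x)/2) (and G(0)=0),
    a(x) = 1 - x/2, is C¹, strictly increasing, and a bijection of [0,1] onto [0,1]. -/
theorem xi_C1_increasing_bijective
    (a S G ξ : ℝ → ℝ)
    (ha : ∀ x, a x = 1 - x / 2)
    (hS : ∀ x, S x = 2 / Real.sqrt 3 * Real.sin (π * x / 2))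
    (hG0 : G 0 = 0)
    (hG : ∀ x ∈ Set.Ioc (0 : ℝ) 1, G x = ∏' n : ℕ, S (a^[n] x))
    (hξ : ∀ x ∈ Set.Icc (0 : ℝ) 1, ξ x = G (x / 2) / G (1 - x / 2)) :
    ContDiffOn ℝ 1 ξ (Set.Icc 0 1) ∧
    StrictMonoOn ξ (Set.Icc 0 1) ∧
    Set.BijOn ξ (Set.Icc 0 1) (Set.Icc 0 1) := by
  obtain rfl : a = SineProduct.a := funext ha
  obtain rfl : S = SineProduct.S := funext hS
  have hG_exp (y : ℝ) (hy : y ∈ Ioc 0 1) : G y = exp (SineProduct.logG y) :=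
    (hG y hy).trans (SineProduct.hasProd_S_iterate hy).tprod_eq
  have hξ_xi : EqOn ξ SineProduct.xi (Icc 0 1) :=
    fun x hx => (hξ x hx).trans (SineProduct.eqOn_div_xi hG0 hG_exp hx)
  have hbij := SineProduct.strictMonoOn_xi.bijOn_Icc zero_le_one
    SineProduct.contDiffOn_xi.continuousOn
  rw [SineProduct.xi_zero, SineProduct.xi_one] at hbij
  exact ⟨SineProduct.contDiffOn_xi.congr hξ_xi, SineProduct.strictMonoOn_xi.congr hξ_xi.symm,
    hbij.congr hξ_xi.symm⟩
end

section
/- For every n ≥ 0 and x, y ∈ (0,1], the function h_n(x) = cot(π/3 + (π/2)(-1/2)^n (x/2 - 2/3)) + cot(π/3 + (π/2)(-1/2)^n (1/3 - x/2)) satisfies h_{2n}(x) > h_{2n+1}(y). -/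
open Real

private lemma sin_mul_sin' (a b : ℝ) :
    Real.sin a * Real.sin b = (Real.cos (a - b) - Real.cos (a + b)) / 2 := by
  rw [Real.cos_sub, Real.cos_add]; ring

private lemma cot_add_cot' (a b : ℝ) (ha : Real.sin a ≠ 0) (hb : Real.sin b ≠ 0) :
    Real.cot a + Real.cot b = Real.sin (a+b) / (Real.sin a * Real.sin b) := by
  rw [Real.cot_eq_cos_div_sin, Real.cot_eq_cos_div_sin, Real.sin_add]
  field_simp
  ring

set_option maxHeartbeats 1000000 in
private lemma key_ineq (c x y : ℝ) (hc0 : 0 < c) (hc1 : c ≤ 1)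
    (hx : 0 < x) (hx1 : x ≤ 1) (hy : 0 < y) (hy1 : y ≤ 1) :
    Real.cot (π / 3 + π / 2 * -(c/2) * (y / 2 - 2 / 3))
      + Real.cot (π / 3 + π / 2 * -(c/2) * (1 / 3 - y / 2))
    < Real.cot (π / 3 + π / 2 * c * (x / 2 - 2 / 3))
      + Real.cot (π / 3 + π / 2 * c * (1 / 3 - x / 2)) := by
  have pi_pos := Real.pi_pos
  have hpc : 0 < π * c := mul_pos pi_pos hc0
  have hpc1 : π * c ≤ π := by nlinarith
  have hpcx : 0 < π * c * x := mul_pos hpc hx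
  have hpcx1 : π * c * x ≤ π * c := by nlinarith [mul_pos pi_pos hc0]
  have hpcy : 0 < π * c * y := mul_pos hpc hy
  have hpcy1 : π * c * y ≤ π * c := by nlinarith [mul_pos pi_pos hc0]
  -- positivity of the four sines
  have hsu1 : 0 < Real.sin (π / 3 + π / 2 * c * (x / 2 - 2 / 3)) :=
    Real.sin_pos_of_pos_of_lt_pi (by linarith) (by linarith)
  have hsu2 : 0 < Real.sin (π / 3 + π / 2 * c * (1 / 3 - x / 2)) :=
    Real.sin_pos_of_pos_of_lt_pi (by linarith) (by linarith)
  have hsv1 : 0 < Real.sin (π / 3 + π / 2 * -(c/2) * (y / 2 - 2 / 3)) :=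
    Real.sin_pos_of_pos_of_lt_pi (by linarith) (by linarith)
  have hsv2 : 0 < Real.sin (π / 3 + π / 2 * -(c/2) * (1 / 3 - y / 2)) :=
    Real.sin_pos_of_pos_of_lt_pi (by linarith) (by linarith)
  rw [cot_add_cot' _ _ hsu1.ne' hsu2.ne', cot_add_cot' _ _ hsv1.ne' hsv2.ne']
  have eS : (π / 3 + π / 2 * c * (x / 2 - 2 / 3)) + (π / 3 + π / 2 * c * (1 / 3 - x / 2))
      = 2*π/3 - π*c/6 := by ring
  have eS' : (π / 3 + π / 2 * -(c/2) * (y / 2 - 2 / 3)) + (π / 3 + π / 2 * -(c/2) * (1 / 3 - y / 2))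
      = 2*π/3 + π*c/12 := by ring
  rw [eS, eS', div_lt_div_iff₀ (mul_pos hsv1 hsv2) (mul_pos hsu1 hsu2)]
  -- product-to-sum for denominators
  have hu : Real.sin (π / 3 + π / 2 * c * (x / 2 - 2 / 3))
      * Real.sin (π / 3 + π / 2 * c * (1 / 3 - x / 2))
      = (Real.cos (π*c*(x-1)/2) - Real.cos (2*π/3 - π*c/6)) / 2 := by
    have e1 : π*c*(x-1)/2 = (π / 3 + π / 2 * c * (x / 2 - 2 / 3))
        - (π / 3 + π / 2 * c * (1 / 3 - x / 2)) := by ring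
    have e2 : 2*π/3 - π*c/6 = (π / 3 + π / 2 * c * (x / 2 - 2 / 3))
        + (π / 3 + π / 2 * c * (1 / 3 - x / 2)) := by ring
    rw [sin_mul_sin', ← e1, ← e2]
  have hv : Real.sin (π / 3 + π / 2 * -(c/2) * (y / 2 - 2 / 3))
      * Real.sin (π / 3 + π / 2 * -(c/2) * (1 / 3 - y / 2))
      = (Real.cos (π*c*(1-y)/4) - Real.cos (2*π/3 + π*c/12)) / 2 := by
    have e1 : π*c*(1-y)/4 = (π / 3 + π / 2 * -(c/2) * (y / 2 - 2 / 3))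
        - (π / 3 + π / 2 * -(c/2) * (1 / 3 - y / 2)) := by ring
    have e2 : 2*π/3 + π*c/12 = (π / 3 + π / 2 * -(c/2) * (y / 2 - 2 / 3))
        + (π / 3 + π / 2 * -(c/2) * (1 / 3 - y / 2)) := by ring
    rw [sin_mul_sin', ← e1, ← e2]
  rw [hu, hv]
  -- rewrite numerators
  have s1 : Real.sin (2*π/3 - π*c/6) = Real.sin (π/3 + π*c/6) := by
    have e : 2*π/3 - π*c/6 = π - (π/3 + π*c/6) := by ring
    rw [e, Real.sin_pi_sub]
  have s2 : Real.sin (2*π/3 + π*c/12) = Real.sin (π/3 - π*c/12) := by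
    have e : 2*π/3 + π*c/12 = π - (π/3 - π*c/12) := by ring
    rw [e, Real.sin_pi_sub]
  rw [s1, s2]
  -- numerator comparison
  have m1 : Real.sin (π/3 - π*c/12) < Real.sin (π/3 + π*c/6) :=
    Real.sin_lt_sin_of_lt_of_le_pi_div_two (by linarith) (by linarith) (by linarith)
  have m0 : 0 < Real.sin (π/3 - π*c/12) :=
    Real.sin_pos_of_pos_of_lt_pi (by linarith) (by linarith)
  -- cos bounds
  have b1 : Real.cos (π*c*(x-1)/2) ≤ 1 := Real.cos_le_one _
  have b2 : Real.cos (π*c/4) ≤ Real.cos (π*c*(1-y)/4) :=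
    Real.cos_le_cos_of_nonneg_of_le_pi (by linarith) (by linarith) (by linarith)
  have b3 : 0 ≤ Real.cos (π*c/4) :=
    Real.cos_nonneg_of_mem_Icc ⟨by linarith, by linarith⟩
  have b4 : Real.cos (2*π/3 + π*c/12) < 0 :=
    Real.cos_neg_of_pi_div_two_lt_of_lt (by linarith) (by linarith)
  -- key middle inequality : 1 - cos(πc/4) ≤ cos S - cos S'
  have hq : Real.cos (π*c/4) = 1 - 2 * Real.sin (π*c/8)^2 := by
    have e : π*c/4 = 2*(π*c/8) := by ring
    rw [e, Real.cos_two_mul, Real.cos_sq']; ring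
  have hd : Real.cos (2*π/3 - π*c/6) - Real.cos (2*π/3 + π*c/12)
      = 2 * Real.sin (π/3 + π*c/24) * Real.sin (π*c/8) := by
    rw [Real.cos_sub_cos]
    have e1 : (2*π/3 - π*c/6 + (2*π/3 + π*c/12))/2 = π - (π/3 + π*c/24) := by ring
    have e2 : (2*π/3 - π*c/6 - (2*π/3 + π*c/12))/2 = -(π*c/8) := by ring
    rw [e1, e2, Real.sin_pi_sub, Real.sin_neg]; ring
  have hs8 : 0 ≤ Real.sin (π*c/8) :=
    Real.sin_nonneg_of_nonneg_of_le_pi (by linarith) (by linarith)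
  have hs8' : Real.sin (π*c/8) ≤ Real.sin (π/3 + π*c/24) :=
    (Real.sin_lt_sin_of_lt_of_le_pi_div_two (by linarith) (by linarith) (by linarith)).le
  have hmid : 1 - Real.cos (π*c/4)
      ≤ Real.cos (2*π/3 - π*c/6) - Real.cos (2*π/3 + π*c/12) := by
    rw [hq, hd]
    nlinarith [mul_le_mul_of_nonneg_left hs8' hs8]
  -- finish
  have hD : 0 < Real.cos (π*c*(1-y)/4) - Real.cos (2*π/3 + π*c/12) := by linarith
  have hchain : Real.cos (π*c*(x-1)/2) - Real.cos (2*π/3 - π*c/6)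
      ≤ Real.cos (π*c*(1-y)/4) - Real.cos (2*π/3 + π*c/12) := by linarith
  nlinarith [mul_le_mul_of_nonneg_left hchain m0.le, mul_lt_mul_of_pos_right m1 hD]

/-- For h_n(x) = cot(π/3 + (π/2)(-1/2)^n(x/2 - 2/3)) + cot(π/3 + (π/2)(-1/2)^n(1/3 - x/2)),
    one has h_{2n}(x) > h_{2n+1}(y) for all x, y ∈ (0,1]. -/
theorem h_even_gt_h_odd
    (h : ℕ → ℝ → ℝ)
    (hh : ∀ n : ℕ, ∀ x : ℝ,
      h n x = Real.cot (π / 3 + π / 2 * (-1 / 2 : ℝ) ^ n * (x / 2 - 2 / 3))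
            + Real.cot (π / 3 + π / 2 * (-1 / 2 : ℝ) ^ n * (1 / 3 - x / 2))) :
    ∀ n : ℕ, ∀ x ∈ Set.Ioc (0 : ℝ) 1, ∀ y ∈ Set.Ioc (0 : ℝ) 1,
      h (2 * n) x > h (2 * n + 1) y := by
  intro n x hx y hy
  have hpe : (-1 / 2 : ℝ) ^ (2 * n) = ((1:ℝ)/4) ^ n := by
    rw [pow_mul]; norm_num
  have hpo : (-1 / 2 : ℝ) ^ (2 * n + 1) = -(((1:ℝ)/4) ^ n / 2) := by
    rw [pow_succ, hpe]; ring
  rw [hh (2*n) x, hh (2*n+1) y, hpe, hpo]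
  exact key_ineq (((1:ℝ)/4) ^ n) x y (by positivity)
    (pow_le_one₀ (by norm_num) (by norm_num)) hx.1 hx.2 hy.1 hy.2
end

section
/- Let A₀ = [[1,1],[0,1]] and A₁ = [[1,0],[1,1]]. If 2^N ≤ n < 2^{N+1} has binary expansion n = 2^N + ∑_{0≤j<N} ε_j 2^j, then the column vector (s(n+1), s(n))ᵀ equals A_{ε₀}···A_{ε_{N-1}} applied to (1,1)ᵀ, where s is the Stern sequence. -/
/-- With A₀ = [[1,1],[0,1]] and A₁ = [[1,0],[1,1]], if n = 2^N + ∑_{0≤j<N} ε_j 2^j,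
    then (s(n+1), s(n))ᵀ = A_{ε₀} ⋯ A_{ε_{N-1}} (1,1)ᵀ, where s is the Stern sequence. -/
theorem stern_matrix_product
    (s : ℕ → ℕ) (h0 : s 0 = 0) (h1 : s 1 = 1)
    (heven : ∀ n, s (2 * n) = s n)
    (hodd : ∀ n, s (2 * n + 1) = s n + s (n + 1))
    (A : Fin 2 → Matrix (Fin 2) (Fin 2) ℕ)
    (hA0 : A 0 = !![1, 1; 0, 1]) (hA1 : A 1 = !![1, 0; 1, 1]) :
    ∀ (N : ℕ) (ε : Fin N → Fin 2),
      ∀ n : ℕ, n = 2 ^ N + ∑ j : Fin N, (ε j : ℕ) * 2 ^ (j : ℕ) →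
      (List.ofFn (fun j : Fin N => A (ε j))).prod.mulVec ![1, 1] = ![s (n + 1), s n] := by
  have hs2 : s 2 = 1 := by have := heven 1; simpa [h1] using this
  intro N
  induction N with
  | zero =>
    intro ε n hn
    simp only [Finset.univ_eq_empty, Finset.sum_empty, pow_zero] at hn
    subst hn
    funext i
    fin_cases i <;>
      simp [Matrix.mulVec, dotProduct, h1, hs2]
  | succ N ih =>
    intro ε n hn
    set m := 2 ^ N + ∑ j : Fin N, ((ε j.succ : ℕ) * 2 ^ (j : ℕ)) with hm
    have hrest := ih (fun j => ε j.succ) m hm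
    have hsum : ∑ j : Fin (N+1), (ε j : ℕ) * 2 ^ (j : ℕ)
        = (ε 0 : ℕ) + 2 * ∑ j : Fin N, (ε j.succ : ℕ) * 2 ^ (j : ℕ) := by
      rw [Fin.sum_univ_succ, Finset.mul_sum]
      simp [pow_succ, mul_comm, mul_left_comm, mul_assoc]
    have hn2 : n = 2 * m + (ε 0 : ℕ) := by
      rw [hn, hsum, hm, pow_succ]
      ring
    rw [List.ofFn_succ, List.prod_cons, ← Matrix.mulVec_mulVec, hrest]
    have h01 : (ε 0 : ℕ) = 0 ∨ (ε 0 : ℕ) = 1 := by omega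
    rcases h01 with h | h
    · have hε : ε 0 = 0 := by ext; simpa using h
      rw [hε, hA0]
      have hne : n = 2 * m := by omega
      have e1 : s n = s m := by rw [hne, heven]
      have e2 : s (n + 1) = s m + s (m + 1) := by rw [hne, hodd]
      funext i
      fin_cases i <;>
        simp [Matrix.mulVec, dotProduct, e1, e2, Nat.add_comm]
    · have hε : ε 0 = 1 := by ext; simpa using h
      rw [hε, hA1]
      have hne : n = 2 * m + 1 := by omega
      have e1 : s n = s m + s (m + 1) := by rw [hne, hodd]
      have e2 : s (n + 1) = s (m + 1) := by
        have : n + 1 = 2 * (m + 1) := by omega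
        rw [this, heven]
      funext i
      fin_cases i <;>
        simp [Matrix.mulVec, dotProduct, e1, e2, Nat.add_comm]
end

section
/- The matrices B₀ = [[0,1],[1,1]] and B₁ = [[1,0],[1,1]] generate a free monoid: distinct finite words in B₀, B₁ give distinct matrix products. -/
lemma mulB0' (S : Matrix (Fin 2) (Fin 2) ℕ) :
    (!![0, 1; 1, 1] * S) = !![S 1 0, S 1 1; S 0 0 + S 1 0, S 0 1 + S 1 1] := by
  ext a b
  fin_cases a <;> fin_cases b <;> simp [Matrix.mul_apply, Fin.sum_univ_two]

lemma mulB1' (S : Matrix (Fin 2) (Fin 2) ℕ) :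
    (!![1, 0; 1, 1] * S) = !![S 0 0, S 0 1; S 0 0 + S 1 0, S 0 1 + S 1 1] := by
  ext a b
  fin_cases a <;> fin_cases b <;> simp [Matrix.mul_apply, Fin.sum_univ_two]

/-- determinant is ±1 and row sums are ≥ 1 for any product -/
lemma Bprod_det (B : Fin 2 → Matrix (Fin 2) (Fin 2) ℕ)
    (hB0 : B 0 = !![0, 1; 1, 1]) (hB1 : B 1 = !![1, 0; 1, 1]) :
    ∀ w : List (Fin 2),
      (1 ≤ (w.map B).prod 0 0 + (w.map B).prod 0 1) ∧
      (1 ≤ (w.map B).prod 1 0 + (w.map B).prod 1 1) ∧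
      ((w.map B).prod 0 0 * (w.map B).prod 1 1 = (w.map B).prod 0 1 * (w.map B).prod 1 0 + 1 ∨
       (w.map B).prod 0 1 * (w.map B).prod 1 0 = (w.map B).prod 0 0 * (w.map B).prod 1 1 + 1) := by
  intro w
  induction w with
  | nil => refine ⟨?_, ?_, Or.inl ?_⟩ <;> simp [Matrix.one_apply]
  | cons i t ih =>
    obtain ⟨h3, h4, h5⟩ := ih
    set S := (t.map B).prod with hS
    have hps : (((i :: t)).map B).prod = B i * S := by simp [hS]
    rw [hps]
    have hi : i = 0 ∨ i = 1 := by omega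
    rcases hi with hi | hi <;> subst hi
    · rw [hB0, mulB0']
      simp only [Matrix.cons_val', Matrix.cons_val_zero, Matrix.cons_val_one, Matrix.head_cons,
        Matrix.empty_val', Matrix.cons_val_fin_one, Matrix.of_apply, Matrix.head_fin_const]
      refine ⟨by omega, by omega, ?_⟩
      rcases h5 with h5 | h5
      · right; nlinarith
      · left; nlinarith
    · rw [hB1, mulB1']
      simp only [Matrix.cons_val', Matrix.cons_val_zero, Matrix.cons_val_one, Matrix.head_cons,
        Matrix.empty_val', Matrix.cons_val_fin_one, Matrix.of_apply, Matrix.head_fin_const]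
      refine ⟨by omega, by omega, ?_⟩
      rcases h5 with h5 | h5
      · left; nlinarith
      · right; nlinarith

/-- rows of any nonempty product are ordered: row 0 ≤ row 1 entrywise -/
lemma head_le (B : Fin 2 → Matrix (Fin 2) (Fin 2) ℕ)
    (hB0 : B 0 = !![0, 1; 1, 1]) (hB1 : B 1 = !![1, 0; 1, 1])
    (i : Fin 2) (S : Matrix (Fin 2) (Fin 2) ℕ) :
    (B i * S) 0 0 ≤ (B i * S) 1 0 ∧ (B i * S) 0 1 ≤ (B i * S) 1 1 := by
  have hi : i = 0 ∨ i = 1 := by omega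
  rcases hi with hi | hi <;> subst hi
  · rw [hB0, mulB0']; constructor <;> simp
  · rw [hB1, mulB1']; constructor <;> simp

/-- cancellation: B i is left-cancellable -/
lemma cancelB (B : Fin 2 → Matrix (Fin 2) (Fin 2) ℕ)
    (hB0 : B 0 = !![0, 1; 1, 1]) (hB1 : B 1 = !![1, 0; 1, 1])
    (i : Fin 2) (X Y : Matrix (Fin 2) (Fin 2) ℕ) (h : B i * X = B i * Y) : X = Y := by
  have hi : i = 0 ∨ i = 1 := by omega
  rcases hi with hi | hi <;> subst hi
  · rw [hB0, mulB0', mulB0'] at h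
    have e1 : X 1 0 = Y 1 0 := by have := congrFun (congrFun h 0) 0; simpa using this
    have e2 : X 1 1 = Y 1 1 := by have := congrFun (congrFun h 0) 1; simpa using this
    have e3 : X 0 0 + X 1 0 = Y 0 0 + Y 1 0 := by
      have := congrFun (congrFun h 1) 0; simpa using this
    have e4 : X 0 1 + X 1 1 = Y 0 1 + Y 1 1 := by
      have := congrFun (congrFun h 1) 1; simpa using this
    ext a b; fin_cases a <;> fin_cases b <;> simp <;> omega
  · rw [hB1, mulB1', mulB1'] at h
    have e1 : X 0 0 = Y 0 0 := by have := congrFun (congrFun h 0) 0; simpa using this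
    have e2 : X 0 1 = Y 0 1 := by have := congrFun (congrFun h 0) 1; simpa using this
    have e3 : X 0 0 + X 1 0 = Y 0 0 + Y 1 0 := by
      have := congrFun (congrFun h 1) 0; simpa using this
    have e4 : X 0 1 + X 1 1 = Y 0 1 + Y 1 1 := by
      have := congrFun (congrFun h 1) 1; simpa using this
    ext a b; fin_cases a <;> fin_cases b <;> simp <;> omega

/-- products with distinct heads differ -/
lemma no_mix (B : Fin 2 → Matrix (Fin 2) (Fin 2) ℕ)
    (hB0 : B 0 = !![0, 1; 1, 1]) (hB1 : B 1 = !![1, 0; 1, 1])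
    (s t : List (Fin 2))
    (h : !![0, 1; 1, 1] * (s.map B).prod = !![1, 0; 1, 1] * (t.map B).prod) : False := by
  set S := (s.map B).prod with hS
  set T := (t.map B).prod with hT
  rw [mulB0', mulB1'] at h
  have e1 : S 1 0 = T 0 0 := by have := congrFun (congrFun h 0) 0; simpa using this
  have e2 : S 1 1 = T 0 1 := by have := congrFun (congrFun h 0) 1; simpa using this
  have e3 : S 0 0 + S 1 0 = T 0 0 + T 1 0 := by
    have := congrFun (congrFun h 1) 0; simpa using this
  have e4 : S 0 1 + S 1 1 = T 0 1 + T 1 1 := by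
    have := congrFun (congrFun h 1) 1; simpa using this
  rcases s with _ | ⟨i, s'⟩
  · -- S = 1
    have s00 : S 0 0 = 1 := by simp [hS, Matrix.one_apply]
    have s01 : S 0 1 = 0 := by simp [hS, Matrix.one_apply]
    have s10 : S 1 0 = 0 := by simp [hS, Matrix.one_apply]
    have s11 : S 1 1 = 1 := by simp [hS, Matrix.one_apply]
    rcases t with _ | ⟨j, t'⟩
    · have t00 : T 0 0 = 1 := by simp [hT, Matrix.one_apply]
      omega
    · have hTp : T = B j * (t'.map B).prod := by simp [hT]
      have ht := head_le B hB0 hB1 j (t'.map B).prod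
      rw [← hTp] at ht
      omega
  · have hSp : S = B i * (s'.map B).prod := by simp [hS]
    have hs := head_le B hB0 hB1 i (s'.map B).prod
    rw [← hSp] at hs
    rcases t with _ | ⟨j, t'⟩
    · have t00 : T 0 0 = 1 := by simp [hT, Matrix.one_apply]
      have t01 : T 0 1 = 0 := by simp [hT, Matrix.one_apply]
      have t10 : T 1 0 = 0 := by simp [hT, Matrix.one_apply]
      have t11 : T 1 1 = 1 := by simp [hT, Matrix.one_apply]
      omega
    · have hTp : T = B j * (t'.map B).prod := by simp [hT]
      have ht := head_le B hB0 hB1 j (t'.map B).prod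
      rw [← hTp] at ht
      have hd := (Bprod_det B hB0 hB1 (j :: t')).2.2
      rw [← hT] at hd
      have h00 : T 0 0 = T 1 0 := by omega
      have h01 : T 0 1 = T 1 1 := by omega
      have : T 0 0 * T 1 1 = T 0 1 * T 1 0 := by rw [h00, h01]; ring
      omega

/-- The matrices B₀ = [[0,1],[1,1]] and B₁ = [[1,0],[1,1]] generate a free monoid:
    distinct words give distinct products. -/
theorem B_matrices_free_monoid
    (B : Fin 2 → Matrix (Fin 2) (Fin 2) ℕ)
    (hB0 : B 0 = !![0, 1; 1, 1]) (hB1 : B 1 = !![1, 0; 1, 1]) :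
    ∀ w₁ w₂ : List (Fin 2), (w₁.map B).prod = (w₂.map B).prod → w₁ = w₂ := by
  have nonempty_ne_one : ∀ (j : Fin 2) (t : List (Fin 2)),
      B j * (t.map B).prod ≠ 1 := by
    intro j t h
    set S := (t.map B).prod with hS
    have hj : j = 0 ∨ j = 1 := by omega
    rcases hj with hj | hj <;> subst hj
    · rw [hB0, mulB0'] at h
      have e1 : S 1 0 = 1 := by
        have := congrFun (congrFun h 0) 0; simpa [Matrix.one_apply] using this
      have e3 : S 0 0 + S 1 0 = 0 := by
        have := congrFun (congrFun h 1) 0; simpa [Matrix.one_apply] using this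
      omega
    · rw [hB1, mulB1'] at h
      have e1 : S 0 0 = 1 := by
        have := congrFun (congrFun h 0) 0; simpa [Matrix.one_apply] using this
      have e3 : S 0 0 + S 1 0 = 0 := by
        have := congrFun (congrFun h 1) 0; simpa [Matrix.one_apply] using this
      omega
  intro w₁
  induction w₁ with
  | nil =>
    intro w₂ h
    rcases w₂ with _ | ⟨j, t₂⟩
    · rfl
    · exfalso
      simp only [List.map_nil, List.prod_nil, List.map_cons, List.prod_cons] at h
      exact nonempty_ne_one j t₂ h.symm
  | cons i t₁ ih =>
    intro w₂ h
    rcases w₂ with _ | ⟨j, t₂⟩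
    · exfalso
      simp only [List.map_nil, List.prod_nil, List.map_cons, List.prod_cons] at h
      exact nonempty_ne_one i t₁ h
    · simp only [List.map_cons, List.prod_cons] at h
      have hij : i = j := by
        have hi : i = 0 ∨ i = 1 := by omega
        have hj : j = 0 ∨ j = 1 := by omega
        rcases hi with hi | hi <;> rcases hj with hj | hj <;> subst hi <;> subst hj <;>
          first
          | rfl
          | (exfalso
             rw [hB0, hB1] at h
             first
             | exact no_mix B hB0 hB1 t₁ t₂ h
             | exact no_mix B hB0 hB1 t₂ t₁ h.symm)
      subst hij
      have hp := cancelB B hB0 hB1 i _ _ h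
      rw [ih t₂ hp]
end

section
/- For the Stern sequence s and any positive integer τ and N ≥ 1, the difference M_τ(N) - M_τ(N-1), where M_τ(N) = ∑_{2^N < n ≤ 2^{N+1}} s(n)^τ, equals (1/2) P_τ^N[1](1), where P_τ[f](x) = (1+x)^τ(f(1/(1+x)) + f(x/(1+x))) and 1 denotes the constant function 1. -/
open Finset

private lemma stern_posT (s : ℕ → ℕ) (h1 : s 1 = 1)
    (heven : ∀ n, s (2 * n) = s n)
    (hodd : ∀ n, s (2 * n + 1) = s n + s (n + 1)) :
    ∀ n, 1 ≤ n → 1 ≤ s n := by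
  intro n
  induction n using Nat.strong_induction_on with
  | _ n ih =>
    intro hn
    rcases Nat.even_or_odd n with ⟨m, hm⟩ | ⟨m, hm⟩
    · have hn2 : n = 2 * m := by omega
      subst hn2
      rw [heven]
      exact ih m (by omega) (by omega)
    · subst hm
      rcases Nat.eq_zero_or_pos m with h | h
      · subst h; simp [h1]
      · rw [hodd]
        have := ih (m + 1) (by omega) (by omega)
        omega

private lemma stern_mirrorT (s : ℕ → ℕ) (h1 : s 1 = 1)
    (heven : ∀ n, s (2 * n) = s n)
    (hodd : ∀ n, s (2 * n + 1) = s n + s (n + 1)) :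
    ∀ N n, 2 ^ N ≤ n → n ≤ 2 ^ (N + 1) → s (3 * 2 ^ N - n) = s n := by
  intro N
  induction N with
  | zero =>
    intro n hl hu
    have hs2 : s 2 = 1 := by have := heven 1; rwa [h1] at this
    interval_cases n <;> simp [hs2, h1]
  | succ N ih =>
    intro n hl hu
    have hQ : (1:ℕ) ≤ 2 ^ N := Nat.one_le_two_pow
    have e1 : (2:ℕ) ^ (N + 1) = 2 * 2 ^ N := by ring
    have e2 : (2:ℕ) ^ (N + 2) = 4 * 2 ^ N := by ring
    rcases Nat.even_or_odd n with ⟨m, hm⟩ | ⟨m, hm⟩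
    · have hn2 : n = 2 * m := by omega
      subst hn2
      have hsub : 3 * 2 ^ (N + 1) - 2 * m = 2 * (3 * 2 ^ N - m) := by omega
      rw [hsub, heven, heven, ih m (by omega) (by omega)]
    · subst hm
      have hml : 2 ^ N ≤ m := by omega
      have hmu : m + 1 ≤ 2 ^ (N + 1) := by omega
      have hsub : 3 * 2 ^ (N + 1) - (2 * m + 1) = 2 * (3 * 2 ^ N - (m + 1)) + 1 := by omega
      have hstep : 3 * 2 ^ N - (m + 1) + 1 = 3 * 2 ^ N - m := by omega
      rw [hsub, hodd, hodd, hstep, ih (m + 1) (by omega) hmu, ih m hml (by omega)]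
      omega

private lemma sum_double'T (g : ℕ → ℝ) (L : ℕ) :
    ∑ n ∈ range (2 * L), g n = ∑ m ∈ range L, (g (2 * m) + g (2 * m + 1)) := by
  induction L with
  | zero => simp
  | succ L ih =>
    have h : 2 * (L + 1) = (2 * L + 1) + 1 := by ring
    rw [h, sum_range_succ, sum_range_succ, ih, sum_range_succ]; ring

private lemma sum_Ico_doubleT (g : ℕ → ℝ) (K L : ℕ) (h : K ≤ L) :
    ∑ n ∈ Ico (2 * K) (2 * L), g n = ∑ m ∈ Ico K L, (g (2 * m) + g (2 * m + 1)) := by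
  rw [Finset.sum_Ico_eq_sub _ (by omega : 2 * K ≤ 2 * L), Finset.sum_Ico_eq_sub _ h,
    sum_double'T, sum_double'T]

private lemma key_lemmaT (s : ℕ → ℕ) (h1 : s 1 = 1)
    (heven : ∀ n, s (2 * n) = s n)
    (hodd : ∀ n, s (2 * n + 1) = s n + s (n + 1))
    (τ : ℕ)
    (P : (ℝ → ℝ) → (ℝ → ℝ))
    (hP : ∀ f x, P f x = (1 + x) ^ τ * (f (1 / (1 + x)) + f (x / (1 + x)))) :
    ∀ N (f : ℝ → ℝ), P^[N + 1] f 1 =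
      2 * ∑ n ∈ Ico (2 ^ N) (2 ^ (N + 1)),
        ((s n : ℝ) + (s (n + 1) : ℝ)) ^ τ *
          f ((s n : ℝ) / ((s n : ℝ) + (s (n + 1) : ℝ))) := by
  intro N
  induction N with
  | zero =>
    intro f
    have hico : Ico (2 ^ 0) (2 ^ 1) = {1} := rfl
    have hs2 : s 2 = 1 := by have := heven 1; rwa [h1] at this
    rw [Function.iterate_one, hP, hico, sum_singleton, h1]
    norm_num [hs2]
    ring
  | succ N ih =>
    intro f
    rw [Function.iterate_succ_apply, ih (P f)]
    have hpos : ∀ k, 1 ≤ k → (1:ℝ) ≤ (s k : ℝ) := by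
      intro k hk; exact_mod_cast stern_posT s h1 heven hodd k hk
    have hQ1 : (1:ℕ) ≤ 2 ^ N := Nat.one_le_two_pow
    have expand : ∀ a b : ℝ, 1 ≤ a → 1 ≤ b →
        (a + b) ^ τ * ((1 + a / (a + b)) ^ τ *
          (f (1 / (1 + a / (a + b))) + f (a / (a + b) / (1 + a / (a + b))))) =
        (2 * a + b) ^ τ * f ((a + b) / (2 * a + b)) +
        (2 * a + b) ^ τ * f (a / (2 * a + b)) := by
      intro a b ha hb
      have hab : a + b ≠ 0 := by nlinarith
      have h2ab : 2 * a + b ≠ 0 := by nlinarith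
      have hx : 1 + a / (a + b) = (2 * a + b) / (a + b) := by field_simp; ring
      have hu : 1 / ((2 * a + b) / (a + b)) = (a + b) / (2 * a + b) := one_div_div _ _
      have hv : a / (a + b) / ((2 * a + b) / (a + b)) = a / (2 * a + b) := by
        rw [div_div_div_eq, mul_comm a (a + b), mul_div_mul_left _ _ hab]
      have hpow : (a + b) ^ τ * ((2 * a + b) / (a + b)) ^ τ = (2 * a + b) ^ τ := by
        rw [div_pow]; field_simp
      rw [hx, hu, hv, ← mul_assoc, hpow, mul_add]
    have hL : ∀ n ∈ Ico (2 ^ N) (2 ^ (N + 1)),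
        ((s n : ℝ) + (s (n + 1) : ℝ)) ^ τ *
          P f ((s n : ℝ) / ((s n : ℝ) + (s (n + 1) : ℝ))) =
        (2 * (s n : ℝ) + (s (n + 1) : ℝ)) ^ τ *
            f (((s n : ℝ) + (s (n + 1) : ℝ)) / (2 * (s n : ℝ) + (s (n + 1) : ℝ))) +
          (2 * (s n : ℝ) + (s (n + 1) : ℝ)) ^ τ *
            f ((s n : ℝ) / (2 * (s n : ℝ) + (s (n + 1) : ℝ))) := by
      intro n hn
      rw [mem_Ico] at hn
      rw [hP]
      exact expand _ _ (hpos n (by omega)) (hpos (n + 1) (by omega))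
    rw [sum_congr rfl hL, sum_add_distrib]
    have hsplit : ∑ n ∈ Ico (2 ^ (N + 1)) (2 ^ (N + 2)),
        ((s n : ℝ) + (s (n + 1) : ℝ)) ^ τ * f ((s n : ℝ) / ((s n : ℝ) + (s (n + 1) : ℝ))) =
        ∑ m ∈ Ico (2 ^ N) (2 ^ (N + 1)),
          (((s (2 * m) : ℝ) + (s (2 * m + 1) : ℝ)) ^ τ *
              f ((s (2 * m) : ℝ) / ((s (2 * m) : ℝ) + (s (2 * m + 1) : ℝ))) +
           ((s (2 * m + 1) : ℝ) + (s (2 * m + 1 + 1) : ℝ)) ^ τ *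
              f ((s (2 * m + 1) : ℝ) / ((s (2 * m + 1) : ℝ) + (s (2 * m + 1 + 1) : ℝ)))) := by
      have h2 := sum_Ico_doubleT
        (fun n => ((s n : ℝ) + (s (n + 1) : ℝ)) ^ τ *
          f ((s n : ℝ) / ((s n : ℝ) + (s (n + 1) : ℝ))))
        (2 ^ N) (2 ^ (N + 1)) (Nat.pow_le_pow_right (by norm_num) (by omega))
      simpa only [show 2 * 2 ^ N = 2 ^ (N + 1) from by ring,
        show 2 * 2 ^ (N + 1) = 2 ^ (N + 2) from by ring] using h2
    rw [hsplit, sum_add_distrib]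
    have hE : ∀ n ∈ Ico (2 ^ N) (2 ^ (N + 1)),
        ((s (2 * n) : ℝ) + (s (2 * n + 1) : ℝ)) ^ τ *
          f ((s (2 * n) : ℝ) / ((s (2 * n) : ℝ) + (s (2 * n + 1) : ℝ))) =
        (2 * (s n : ℝ) + (s (n + 1) : ℝ)) ^ τ *
          f ((s n : ℝ) / (2 * (s n : ℝ) + (s (n + 1) : ℝ))) := by
      intro n _
      rw [heven n, hodd n]
      push_cast
      rw [show (s n : ℝ) + ((s n : ℝ) + (s (n + 1) : ℝ)) =
        2 * (s n : ℝ) + (s (n + 1) : ℝ) from by ring]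
    have hO : ∀ n ∈ Ico (2 ^ N) (2 ^ (N + 1)),
        ((s (2 * n + 1) : ℝ) + (s (2 * n + 1 + 1) : ℝ)) ^ τ *
          f ((s (2 * n + 1) : ℝ) / ((s (2 * n + 1) : ℝ) + (s (2 * n + 1 + 1) : ℝ))) =
        ((s n : ℝ) + 2 * (s (n + 1) : ℝ)) ^ τ *
          f (((s n : ℝ) + (s (n + 1) : ℝ)) / ((s n : ℝ) + 2 * (s (n + 1) : ℝ))) := by
      intro n _
      rw [show 2 * n + 1 + 1 = 2 * (n + 1) from by ring, heven, hodd]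
      push_cast
      rw [show (s n : ℝ) + (s (n + 1) : ℝ) + (s (n + 1) : ℝ) =
        (s n : ℝ) + 2 * (s (n + 1) : ℝ) from by ring]
    rw [sum_congr rfl hE, sum_congr rfl hO]
    have hbij : ∑ n ∈ Ico (2 ^ N) (2 ^ (N + 1)),
        (2 * (s n : ℝ) + (s (n + 1) : ℝ)) ^ τ *
          f (((s n : ℝ) + (s (n + 1) : ℝ)) / (2 * (s n : ℝ) + (s (n + 1) : ℝ))) =
        ∑ n ∈ Ico (2 ^ N) (2 ^ (N + 1)),
        ((s n : ℝ) + 2 * (s (n + 1) : ℝ)) ^ τ *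
          f (((s n : ℝ) + (s (n + 1) : ℝ)) / ((s n : ℝ) + 2 * (s (n + 1) : ℝ))) := by
      have he : (2:ℕ) ^ (N + 1) = 2 * 2 ^ N := by ring
      refine sum_nbij' (fun n => 3 * 2 ^ N - 1 - n) (fun n => 3 * 2 ^ N - 1 - n)
        ?_ ?_ ?_ ?_ ?_
      · intro n hn; rw [mem_Ico] at hn ⊢
        omega
      · intro n hn; rw [mem_Ico] at hn ⊢
        omega
      · intro n hn; rw [mem_Ico] at hn
        omega
      · intro n hn; rw [mem_Ico] at hn
        omega
      · intro n hn; rw [mem_Ico] at hn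
        have hm1 : s (3 * 2 ^ N - 1 - n) = s (n + 1) := by
          rw [show 3 * 2 ^ N - 1 - n = 3 * 2 ^ N - (n + 1) from by omega]
          exact stern_mirrorT s h1 heven hodd N (n + 1) (by omega) (by omega)
        have hm2 : s (3 * 2 ^ N - 1 - n + 1) = s n := by
          rw [show 3 * 2 ^ N - 1 - n + 1 = 3 * 2 ^ N - n from by omega]
          exact stern_mirrorT s h1 heven hodd N n (by omega) (by omega)
        rw [hm1, hm2]
        rw [show (s (n + 1) : ℝ) + 2 * (s n : ℝ) = 2 * (s n : ℝ) + (s (n + 1) : ℝ) from by ring,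
          show (s (n + 1) : ℝ) + (s n : ℝ) = (s n : ℝ) + (s (n + 1) : ℝ) from by ring]
    rw [hbij]
    ring

private lemma stern_powT (s : ℕ → ℕ) (h1 : s 1 = 1) (heven : ∀ n, s (2 * n) = s n) :
    ∀ k, s (2 ^ k) = 1 := by
  intro k
  induction k with
  | zero => simpa using h1
  | succ k ih => rw [show (2:ℕ) ^ (k + 1) = 2 * 2 ^ k from by ring, heven, ih]



/-- For the Stern sequence s, τ ≥ 1 an integer and N ≥ 1,
    M_τ(N) - M_τ(N-1) = (1/2) P_τ^N[1](1), where M_τ(N) = ∑_{2^N < n ≤ 2^{N+1}} s(n)^τ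
    and P_τ[f](x) = (1+x)^τ (f(1/(1+x)) + f(x/(1+x))). -/
theorem stern_moment_operator_formula
    (s : ℕ → ℕ) (h0 : s 0 = 0) (h1 : s 1 = 1)
    (heven : ∀ n, s (2 * n) = s n)
    (hodd : ∀ n, s (2 * n + 1) = s n + s (n + 1))
    (τ : ℕ) (hτ : 1 ≤ τ)
    (M : ℕ → ℝ) (hM : ∀ N, M N = ∑ n ∈ Finset.Ioc (2 ^ N) (2 ^ (N + 1)), (s n : ℝ) ^ τ)
    (P : (ℝ → ℝ) → (ℝ → ℝ))
    (hP : ∀ f x, P f x = (1 + x) ^ τ * (f (1 / (1 + x)) + f (x / (1 + x)))) :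
    ∀ N : ℕ, 1 ≤ N → M N - M (N - 1) = (1 / 2) * (P^[N] (fun _ => 1)) 1 := by
  intro N hN
  obtain ⟨K, rfl⟩ : ∃ K, N = K + 1 := ⟨N - 1, by omega⟩
  simp only [Nat.add_sub_cancel]
  have hMIco : ∀ J, M J = ∑ n ∈ Finset.Ico (2 ^ J) (2 ^ (J + 1)), (s n : ℝ) ^ τ := by
    intro J
    rw [hM]
    have hlt : (2:ℕ) ^ J < 2 ^ (J + 1) := Nat.pow_lt_pow_right (by norm_num) (by omega)
    have hIoc : Finset.Ioc (2 ^ J) (2 ^ (J + 1)) =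
        insert (2 ^ (J + 1)) (Finset.Ico (2 ^ J + 1) (2 ^ (J + 1))) := by
      ext x; simp only [Finset.mem_Ioc, Finset.mem_insert, Finset.mem_Ico]; omega
    have hIco : Finset.Ico (2 ^ J) (2 ^ (J + 1)) =
        insert (2 ^ J) (Finset.Ico (2 ^ J + 1) (2 ^ (J + 1))) := by
      ext x; simp only [Finset.mem_insert, Finset.mem_Ico]; omega
    rw [hIoc, hIco, Finset.sum_insert (by simp), Finset.sum_insert (by simp)]
    rw [stern_powT s h1 heven J, stern_powT s h1 heven (J + 1)]
  rw [hMIco (K + 1), hMIco K]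
  have hsplit := sum_Ico_doubleT (fun n => (s n : ℝ) ^ τ) (2 ^ K) (2 ^ (K + 1))
      (Nat.pow_le_pow_right (by norm_num) (by omega))
  rw [show 2 * 2 ^ K = 2 ^ (K + 1) from by ring,
    show 2 * 2 ^ (K + 1) = 2 ^ (K + 2) from by ring] at hsplit
  rw [hsplit, Finset.sum_add_distrib]
  have heq : ∀ n ∈ Finset.Ico (2 ^ K) (2 ^ (K + 1)),
      ((s (2 * n) : ℝ)) ^ τ = (s n : ℝ) ^ τ := by
    intro n _; rw [heven]
  rw [Finset.sum_congr rfl heq]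
  rw [key_lemmaT s h1 heven hodd τ P hP K (fun _ => 1)]
  simp only [mul_one]
  have hodd' : ∀ n ∈ Finset.Ico (2 ^ K) (2 ^ (K + 1)),
      ((s (2 * n + 1) : ℝ)) ^ τ = ((s n : ℝ) + (s (n + 1) : ℝ)) ^ τ := by
    intro n _; rw [hodd]; push_cast; ring
  rw [Finset.sum_congr rfl hodd']
  ring
end

section
/- Define P_τ on ℝ_τ[x] (polynomials of degree ≤ τ) by P_τ[f](x) = (1+x)^τ(f(1/(1+x)) + f(x/(1+x))). Then P_τ has a simple dominant positive eigenvalue σ_τ equal to its spectral radius, and σ_τ > 1. -/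
/-!
In the monomial basis `1, X, …, X^τ`, the operator sends `X^k` to `(1 + X)^(τ-k) (1 + X^k)`, so
its matrix `A` is entrywise nonnegative with positive first row and first column; hence `A²` is
positive and `A` is primitive. Perron's theorem for primitive matrices then provides the simple
dominant eigenvalue `σ`, and `σ ≥ A₀₀ = 2` because the Perron eigenvector is positive.

For a positive matrix `B`, Perron's theorem comes from maximising `r` subject to `r • w ≤ B w`
over nonnegative `w ≠ 0` (the Collatz–Wielandt number): a maximiser is a positive eigenvector, and
an eigenvector `w` for `μ` makes `|w|` a competitor for `|μ|`. A primitive `A` inherits all of this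
from the positive power `B = A^(2k)`.
-/

open Matrix Filter Topology Polynomial

theorem exists_pos_forall_add_mul_lt {ι : Type*} [Finite ι] {x y : ι → ℝ} (w : ι → ℝ)
    (h : ∀ i, x i < y i) : ∃ ε > 0, ∀ i, x i + ε * w i < y i := by
  have hnhds : ∀ᶠ ε in 𝓝 (0 : ℝ), ∀ i, x i + ε * w i < y i :=
    eventually_all.2 fun i =>
      ContinuousAt.eventually_lt (by fun_prop) continuousAt_const (by simpa using h i)
  obtain ⟨ε, hε, hεpos⟩ := ((hnhds.filter_mono nhdsWithin_le_nhds).and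
    (self_mem_nhdsWithin (s := Set.Ioi 0))).exists
  exact ⟨ε, hεpos, hε⟩

namespace Matrix

variable {n : Type*} [Fintype n]

theorem mul_apply_pos {A B : Matrix n n ℝ} (hA : ∀ i j, 0 ≤ A i j) (hB : ∀ i j, 0 ≤ B i j)
    {i j : n} (c : n) (hAc : 0 < A i c) (hBc : 0 < B c j) : 0 < (A * B) i j :=
  Finset.sum_pos' (fun l _ => mul_nonneg (hA i l) (hB l j))
    ⟨c, Finset.mem_univ c, mul_pos hAc hBc⟩

theorem isPrimitive_of_pos_col_of_pos_row [DecidableEq n] {A : Matrix n n ℝ} (c : n)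
    (hA : ∀ i j, 0 ≤ A i j) (hcol : ∀ i, 0 < A i c) (hrow : ∀ j, 0 < A c j) :
    A.IsPrimitive :=
  ⟨hA, 2, two_pos, fun i j => by rw [sq]; exact mul_apply_pos hA hA c (hcol i) (hrow j)⟩

theorem mulVec_apply_pos {B : Matrix n n ℝ} (hB : ∀ i j, 0 < B i j) {v : n → ℝ}
    (hv : 0 ≤ v) (hv0 : v ≠ 0) (i : n) : 0 < (B *ᵥ v) i := by
  obtain ⟨j, hj⟩ := Function.ne_iff.1 hv0
  exact Finset.sum_pos' (fun l _ => mul_nonneg (hB i l).le (hv l))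
    ⟨j, Finset.mem_univ j, mul_pos (hB i j) ((hv j).lt_of_ne' hj)⟩

theorem abs_mulVec_le {B : Matrix n n ℝ} (hB : ∀ i j, 0 ≤ B i j) (w : n → ℝ) :
    |B *ᵥ w| ≤ B *ᵥ |w| := fun i => by
  simp only [Pi.abs_apply, mulVec, dotProduct]
  refine (Finset.abs_sum_le_sum_abs _ _).trans_eq (Finset.sum_congr rfl fun j _ => ?_)
  rw [abs_mul, abs_of_nonneg (hB i j)]

theorem abs_smul_abs_le_mulVec_abs {B : Matrix n n ℝ} (hB : ∀ i j, 0 ≤ B i j) {μ : ℝ}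
    {w : n → ℝ} (hw : B *ᵥ w = μ • w) : |μ| • |w| ≤ B *ᵥ |w| := by
  refine le_trans (fun i => ?_) (abs_mulVec_le hB w)
  simp [hw, abs_mul]

theorem exists_isMax_collatzWielandt [Nonempty n] {B : Matrix n n ℝ}
    (hB : ∀ i j, 0 ≤ B i j) :
    ∃ r : ℝ, ∃ u : n → ℝ, 0 ≤ u ∧ u ≠ 0 ∧ r • u ≤ B *ᵥ u ∧
      ∀ (l : ℝ) (w : n → ℝ), 0 ≤ w → w ≠ 0 → l • w ≤ B *ᵥ w → l ≤ r := by
  classical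
  set K : Set (ℝ × (n → ℝ)) :=
    {p | 0 ≤ p.1 ∧ p.2 ∈ stdSimplex ℝ n ∧ p.1 • p.2 ≤ B *ᵥ p.2}
  have hbound : ∀ p ∈ K, p.1 ≤ ∑ i, ∑ j, B i j := by
    rintro ⟨l, v⟩ ⟨-, ⟨hv, hv1⟩, hlv⟩
    calc l = ∑ i, l * v i := by rw [← Finset.mul_sum, hv1, mul_one]
      _ ≤ ∑ i, ∑ j, B i j * v j := Finset.sum_le_sum fun i _ => hlv i
      _ ≤ ∑ i, ∑ j, B i j := Finset.sum_le_sum fun i _ => Finset.sum_le_sum fun j _ =>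
          mul_le_of_le_one_right (hB i j) (mem_Icc_of_mem_stdSimplex ⟨hv, hv1⟩ j).2
  have hKclosed : IsClosed K :=
    (isClosed_le continuous_const continuous_fst).inter
      ((isClosed_stdSimplex ℝ n).preimage continuous_snd |>.inter
        (isClosed_le (f := fun p : ℝ × (n → ℝ) => p.1 • p.2) (g := fun p => B *ᵥ p.2)
          (by fun_prop) (by fun_prop)))
  have hKcompact : IsCompact K :=
    ((isCompact_Icc (a := 0) (b := ∑ i, ∑ j, B i j)).prod
      (isCompact_stdSimplex ℝ n)).of_isClosed_subset hKclosed
        fun p hp => ⟨⟨hp.1, hbound p hp⟩, hp.2.1⟩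
  obtain ⟨i₀⟩ := ‹Nonempty n›
  have hK0 : (0, Pi.single i₀ 1) ∈ K :=
    ⟨le_rfl, single_mem_stdSimplex ℝ i₀, by
      rw [zero_smul]; exact fun i => Finset.sum_nonneg fun j _ =>
        mul_nonneg (hB i j) ((single_mem_stdSimplex ℝ i₀).1 j)⟩
  obtain ⟨⟨r, u⟩, ⟨hr, hu, hru⟩, hmax⟩ :=
    hKcompact.exists_isMaxOn ⟨_, hK0⟩ continuous_fst.continuousOn
  refine ⟨r, u, hu.1, fun h => by simpa [h] using hu.2, hru, fun l w hw hw0 hlw => ?_⟩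
  rcases lt_or_ge l 0 with hl | hl
  · exact hl.le.trans hr
  have hs : 0 < ∑ i, w i := by
    obtain ⟨j, hj⟩ := Function.ne_iff.1 hw0
    exact Finset.sum_pos' (fun i _ => hw i) ⟨j, Finset.mem_univ j, (hw j).lt_of_ne' hj⟩
  refine hmax (a := (l, (∑ i, w i)⁻¹ • w)) ⟨hl, ⟨fun i => ?_, ?_⟩, ?_⟩
  · exact smul_nonneg (inv_nonneg.2 hs.le) (hw i)
  · simp [← Finset.mul_sum, hs.ne']
  · rw [mulVec_smul, smul_comm]
    exact smul_le_smul_of_nonneg_left hlw (inv_nonneg.2 hs.le)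

theorem mulVec_eq_smul_of_smul_le {B : Matrix n n ℝ} (hB : ∀ i j, 0 < B i j) {r : ℝ}
    (hmax : ∀ (l : ℝ) (w : n → ℝ), 0 ≤ w → w ≠ 0 → l • w ≤ B *ᵥ w → l ≤ r)
    {v : n → ℝ} (hv : 0 ≤ v) (hv0 : v ≠ 0) (hrv : r • v ≤ B *ᵥ v) : B *ᵥ v = r • v := by
  -- Otherwise `B v` satisfies `r • B v < B (B v)` in every coordinate, so `r` could be increased.
  by_contra hne
  have hw : 0 ≤ B *ᵥ v := fun i => (mulVec_apply_pos hB hv hv0 i).le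
  have hw0 : B *ᵥ v ≠ 0 := by
    obtain ⟨j, -⟩ := Function.ne_iff.1 hv0
    exact Function.ne_iff.2 ⟨j, (mulVec_apply_pos hB hv hv0 j).ne'⟩
  have hlt : ∀ i, r * (B *ᵥ v) i < (B *ᵥ (B *ᵥ v)) i := fun i => by
    have := mulVec_apply_pos hB (sub_nonneg.2 hrv) (sub_ne_zero.2 hne) i
    simpa [mulVec_sub, mulVec_smul] using this
  obtain ⟨ε, hε, hεlt⟩ := exists_pos_forall_add_mul_lt (B *ᵥ v) hlt
  have := hmax (r + ε) _ hw hw0 fun i => by simpa [add_mul] using (hεlt i).le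
  linarith

theorem pos_of_mulVec_eq_smul {B : Matrix n n ℝ} (hB : ∀ i j, 0 < B i j) {r : ℝ}
    {v : n → ℝ} (hv : 0 ≤ v) (hv0 : v ≠ 0) (h : B *ᵥ v = r • v) : 0 < r ∧ ∀ i, 0 < v i := by
  have hrv : ∀ i, 0 < r * v i := fun i => by simpa [h] using mulVec_apply_pos hB hv hv0 i
  obtain ⟨j, -⟩ := Function.ne_iff.1 hv0
  have hr : 0 < r := pos_of_mul_pos_left (hrv j) (hv j)
  exact ⟨hr, fun i => pos_of_mul_pos_right (hrv i) hr.le⟩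

theorem exists_perron_of_pos [Nonempty n] {B : Matrix n n ℝ} (hB : ∀ i j, 0 < B i j) :
    ∃ r : ℝ, ∃ u : n → ℝ, 0 < r ∧ (∀ i, 0 < u i) ∧ B *ᵥ u = r • u ∧
      (∀ w, B *ᵥ w = r • w → ∃ t : ℝ, w = t • u) ∧
      ∀ μ w, w ≠ 0 → B *ᵥ w = μ • w → |μ| ≤ r := by
  obtain ⟨r, u, hu, hu0, hru, hmax⟩ := exists_isMax_collatzWielandt fun i j => (hB i j).le
  have hBu := mulVec_eq_smul_of_smul_le hB hmax hu hu0 hru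
  obtain ⟨hr, hupos⟩ := pos_of_mulVec_eq_smul hB hu hu0 hBu
  refine ⟨r, u, hr, hupos, hBu, fun w hw => ?_, fun μ w hw0 hw =>
    hmax _ _ (abs_nonneg w) (mt (Pi.abs_eq_zero w).1 hw0)
      (abs_smul_abs_le_mulVec_abs (fun i j => (hB i j).le) hw)⟩
  -- `z` is an eigenvector for `r` vanishing at `i₀`; if nonzero, `|z|` would be a positive one.
  obtain ⟨i₀⟩ := ‹Nonempty n›
  set z := w - (w i₀ / u i₀) • u
  have hz : B *ᵥ z = r • z := by rw [mulVec_sub, mulVec_smul, hw, hBu, smul_sub, smul_comm]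
  refine ⟨w i₀ / u i₀, sub_eq_zero.1 (by_contra fun hz0 => ?_)⟩
  have habs0 : |z| ≠ 0 := mt (Pi.abs_eq_zero z).1 hz0
  have habs : r • |z| ≤ B *ᵥ |z| := by
    simpa [abs_of_pos hr] using abs_smul_abs_le_mulVec_abs (fun i j => (hB i j).le) hz
  have hzpos := (pos_of_mulVec_eq_smul hB (abs_nonneg z) habs0
    (mulVec_eq_smul_of_smul_le hB hmax (abs_nonneg z) habs0 habs)).2 i₀
  simp [z, div_mul_cancel₀ _ (hupos i₀).ne'] at hzpos

theorem pow_mulVec_of_mulVec_eq_smul [DecidableEq n] {A : Matrix n n ℝ} {μ : ℝ} {v : n → ℝ}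
    (h : A *ᵥ v = μ • v) (m : ℕ) : (A ^ m) *ᵥ v = μ ^ m • v := by
  induction m with
  | zero => simp
  | succ m ih => rw [pow_succ, ← mulVec_mulVec, h, mulVec_smul, ih, smul_smul, pow_succ']

theorem IsPrimitive.exists_perron [DecidableEq n] [Nonempty n] {A : Matrix n n ℝ}
    (hA : A.IsPrimitive) :
    ∃ σ : ℝ, ∃ u : n → ℝ, 0 < σ ∧ (∀ i, 0 < u i) ∧ A *ᵥ u = σ • u ∧
      (∀ v, A *ᵥ v = σ • v → ∃ t : ℝ, v = t • u) ∧
      ∀ μ v, v ≠ 0 → A *ᵥ v = μ • v → μ ≠ σ → |μ| < σ := by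
  obtain ⟨hA0, k, hk, hpos⟩ := hA
  -- Working with the even power `A ^ (2 * k)` rules out the eigenvalue `-σ` below.
  set m := 2 * k
  have hm : Even m := even_two_mul k
  have hB : ∀ i j, 0 < (A ^ m) i j := fun i j => by
    rw [pow_mul', sq]
    exact mul_apply_pos (fun i j => (hpos i j).le) (fun i j => (hpos i j).le) i
      (hpos i i) (hpos i j)
  obtain ⟨r, u, hr, hu, hBu, hsimple, hdom⟩ := exists_perron_of_pos hB
  have hu0 : u ≠ 0 := Function.ne_iff.2 ⟨Classical.arbitrary n, (hu _).ne'⟩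
  obtain ⟨σ, hAu⟩ := hsimple (A *ᵥ u) (by
    rw [mulVec_mulVec, ← (Commute.self_pow A m).eq, ← mulVec_mulVec, hBu, mulVec_smul])
  have hσr : σ ^ m = r :=
    smul_left_injective ℝ hu0 ((pow_mulVec_of_mulVec_eq_smul hAu m).symm.trans hBu)
  have hσ : 0 < σ := by
    obtain ⟨i₀⟩ := ‹Nonempty n›
    have hAu_nonneg : 0 ≤ (A *ᵥ u) i₀ :=
      Finset.sum_nonneg fun j _ => mul_nonneg (hA0 i₀ j) (hu j).le
    have hσ0 : 0 ≤ σ := nonneg_of_mul_nonneg_left (by simpa [hAu] using hAu_nonneg) (hu i₀)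
    exact hσ0.lt_of_ne (by rintro rfl; simp [zero_pow (by omega : m ≠ 0)] at hσr; linarith)
  have hsimpleA : ∀ v, A *ᵥ v = σ • v → ∃ t : ℝ, v = t • u := fun v hv =>
    hsimple v (by rw [pow_mulVec_of_mulVec_eq_smul hv, hσr])
  refine ⟨σ, u, hσ, hu, hAu, hsimpleA, fun μ v hv0 hv hne => ?_⟩
  have hBv := pow_mulVec_of_mulVec_eq_smul hv m
  have hle : |μ| ≤ σ := by
    have := hdom _ v hv0 hBv
    rwa [abs_pow, ← hσr, pow_le_pow_iff_left₀ (abs_nonneg μ) hσ.le (by omega)] at this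
  refine hle.lt_of_ne fun heq => hne ?_
  obtain ⟨t, rfl⟩ := hsimple v (by rwa [← hm.pow_abs μ, heq, hσr] at hBv)
  exact smul_left_injective ℝ hv0 (hv.symm.trans (by rw [mulVec_smul, hAu, smul_comm]))

theorem diag_le_of_mulVec_eq_smul {A : Matrix n n ℝ} (hA : ∀ i j, 0 ≤ A i j) {σ : ℝ}
    {u : n → ℝ} (hu : ∀ i, 0 < u i) (h : A *ᵥ u = σ • u) (i : n) : A i i ≤ σ := by
  refine le_of_mul_le_mul_right ?_ (hu i)
  calc A i i * u i ≤ ∑ j, A i j * u j :=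
        Finset.single_le_sum (fun j _ => mul_nonneg (hA i j) (hu j).le) (Finset.mem_univ i)
    _ = σ * u i := by simpa [mulVec, dotProduct] using congrFun h i

end Matrix

theorem spectralRadius_eq_ofReal_of_forall_abs_le {A : Type*} [Ring A] [Algebra ℝ A] {a : A}
    {σ : ℝ} (hσ : σ ∈ spectrum ℝ a) (h : ∀ μ ∈ spectrum ℝ a, |μ| ≤ σ) :
    spectralRadius ℝ a = ENNReal.ofReal σ := by
  refine le_antisymm (iSup₂_le fun μ hμ => ?_) (le_iSup₂_of_le σ hσ ?_)
  · rw [← enorm_eq_nnnorm, Real.enorm_eq_ofReal_abs]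
    exact ENNReal.ofReal_le_ofReal (h μ hμ)
  · rw [← enorm_eq_nnnorm, Real.enorm_eq_ofReal_abs]
    exact ENNReal.ofReal_le_ofReal (le_abs_self σ)

namespace Module.End

open Module

theorem exists_perron_of_isPrimitive_toMatrix {V n : Type*} [AddCommGroup V] [Module ℝ V]
    [Fintype n] [DecidableEq n] [Nonempty n] (b : Basis n ℝ V) {f : End ℝ V}
    (hf : (LinearMap.toMatrix b b f).IsPrimitive) :
    ∃ σ : ℝ, (∀ i, LinearMap.toMatrix b b f i i ≤ σ) ∧ f.HasEigenvalue σ ∧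
      finrank ℝ (f.eigenspace σ) = 1 ∧ (∀ μ, f.HasEigenvalue μ → μ ≠ σ → |μ| < σ) ∧
      spectralRadius ℝ f = ENNReal.ofReal σ := by
  have : FiniteDimensional ℝ V := Module.Finite.of_basis b
  set A := LinearMap.toMatrix b b f
  set e := b.equivFun
  obtain ⟨σ, u, hσ, hu, hAu, hsimple, hdom⟩ := hf.exists_perron
  have hcoord : ∀ μ v, f v = μ • v ↔ A *ᵥ e v = μ • e v := fun μ v => by
    rw [← e.injective.eq_iff, map_smul, b.equivFun_apply, b.equivFun_apply,
      LinearMap.toMatrix_mulVec_repr]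
  have hu0 : e.symm u ≠ 0 := by
    simpa using Function.ne_iff.2 ⟨Classical.arbitrary n, (hu _).ne'⟩
  have heig : f.eigenspace σ = ℝ ∙ e.symm u := by
    ext v
    rw [mem_eigenspace_iff, hcoord, Submodule.mem_span_singleton]
    constructor
    · intro hv
      obtain ⟨t, ht⟩ := hsimple _ hv
      exact ⟨t, by rw [← map_smul, ← ht, e.symm_apply_apply]⟩
    · rintro ⟨t, rfl⟩
      simp [mulVec_smul, hAu, smul_comm t σ]
  have hσeig : f.HasEigenvalue σ := hasEigenvalue_iff.2 (by simpa [heig] using hu0)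
  have hdomf : ∀ μ, f.HasEigenvalue μ → μ ≠ σ → |μ| < σ := fun μ hμ hne => by
    obtain ⟨v, hv⟩ := hμ.exists_hasEigenvector
    exact hdom μ (e v) (by simpa using hv.2) ((hcoord μ v).1 (mem_eigenspace_iff.1 hv.1)) hne
  refine ⟨σ, diag_le_of_mulVec_eq_smul hf.nonneg hu hAu, hσeig,
    by rw [heig, finrank_span_singleton hu0], hdomf,
    spectralRadius_eq_ofReal_of_forall_abs_le (hasEigenvalue_iff_mem_spectrum.1 hσeig) ?_⟩
  intro μ hμ
  rcases eq_or_ne μ σ with rfl | hne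
  · exact (abs_of_pos hσ).le
  · exact (hdomf μ (hasEigenvalue_iff_mem_spectrum.2 hμ) hne).le

end Module.End

-- Column `k` holds the coefficients of `P_τ[X^k] = (1 + X)^(τ-k) (1 + X^k)`.
noncomputable def pTauMatrix (τ : ℕ) : Matrix (Fin (τ + 1)) (Fin (τ + 1)) ℝ :=
  fun i k => ((1 + X) ^ (τ - k) * (1 + X ^ (k : ℕ))).coeff i

theorem pTauMatrix_apply (τ : ℕ) (i k : Fin (τ + 1)) :
    pTauMatrix τ i k =
      (τ - k).choose i + if k ≤ (i : ℕ) then ((τ - k).choose (i - k) : ℝ) else 0 := by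
  simp only [pTauMatrix, mul_add, mul_one, coeff_add, coeff_one_add_X_pow, coeff_mul_X_pow']

theorem pTauMatrix_zero_zero (τ : ℕ) : pTauMatrix τ 0 0 = 2 := by
  norm_num [pTauMatrix_apply]

theorem isPrimitive_pTauMatrix (τ : ℕ) : (pTauMatrix τ).IsPrimitive := by
  refine isPrimitive_of_pos_col_of_pos_row 0 (fun i k => ?_) (fun i => ?_) (fun k => ?_) <;>
    rw [pTauMatrix_apply]
  · positivity
  · have := Nat.choose_pos (Nat.lt_succ_iff.1 i.is_lt)
    simp only [Fin.val_zero, tsub_zero, zero_le, ↓reduceIte]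
    positivity
  · simp only [Fin.val_zero, Nat.choose_zero_right, Nat.cast_one]
    positivity

theorem eval_pTau_monomial {τ k : ℕ} (hk : k ≤ τ) {x : ℝ} (hx : 1 + x ≠ 0) :
    ((1 + X) ^ (τ - k) * (1 + X ^ k)).eval x =
      (1 + x) ^ τ * ((1 / (1 + x)) ^ k + (x / (1 + x)) ^ k) := by
  simp only [eval_mul, eval_pow, eval_add, eval_one, eval_X, div_pow, one_pow]
  rw [← pow_sub_mul_pow (1 + x) hk]
  field_simp

theorem toMatrix_eq_pTauMatrix {τ : ℕ} {T : Module.End ℝ (degreeLT ℝ (τ + 1))}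
    (hT : ∀ p : degreeLT ℝ (τ + 1), ∀ x ∈ Set.Icc (0 : ℝ) 1,
      (T p : ℝ[X]).eval x =
        (1 + x) ^ τ * ((p : ℝ[X]).eval (1 / (1 + x)) + (p : ℝ[X]).eval (x / (1 + x)))) :
    LinearMap.toMatrix (degreeLT.basis ℝ (τ + 1)) (degreeLT.basis ℝ (τ + 1)) T = pTauMatrix τ := by
  ext i k
  have hTk : (T (degreeLT.basis ℝ (τ + 1) k) : ℝ[X]) =
      (1 + X) ^ (τ - k) * (1 + X ^ (k : ℕ)) := by
    refine eq_of_infinite_eval_eq _ _ ((Set.Icc_infinite zero_lt_one).mono fun x hx => ?_)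
    rw [Set.mem_ofPred_eq, hT _ x hx, eval_pTau_monomial (Nat.lt_succ_iff.1 k.is_lt)
      (add_pos_of_pos_of_nonneg one_pos hx.1).ne']
    simp
  rw [LinearMap.toMatrix_apply, degreeLT.basis_repr, hTk, pTauMatrix]

theorem P_tau_perron_eigenvalue_general
    (τ : ℕ)
    (T : Module.End ℝ (Polynomial.degreeLT ℝ (τ + 1)))
    (hT : ∀ p : Polynomial.degreeLT ℝ (τ + 1), ∀ x ∈ Set.Icc (0 : ℝ) 1,
      ((T p : Polynomial ℝ)).eval x =
        (1 + x) ^ τ * ((p : Polynomial ℝ).eval (1 / (1 + x))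
          + (p : Polynomial ℝ).eval (x / (1 + x)))) :
    ∃ σ : ℝ, 1 < σ ∧
      Module.End.HasEigenvalue T σ ∧
      Module.finrank ℝ (Module.End.eigenspace T σ) = 1 ∧
      (∀ μ : ℝ, Module.End.HasEigenvalue T μ → μ ≠ σ → |μ| < σ) ∧
      spectralRadius ℝ T = ENNReal.ofReal σ := by
  have hmat := toMatrix_eq_pTauMatrix hT
  obtain ⟨σ, hdiag, hσ⟩ := Module.End.exists_perron_of_isPrimitive_toMatrix
    (degreeLT.basis ℝ (τ + 1)) (hmat ▸ isPrimitive_pTauMatrix τ)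
  have h2 : 2 ≤ σ := by simpa [hmat, pTauMatrix_zero_zero] using hdiag 0
  exact ⟨σ, by linarith, hσ⟩

/-- The operator P_τ on polynomials of degree ≤ τ, P_τ[f](x) = (1+x)^τ(f(1/(1+x)) + f(x/(1+x))),
    has a simple dominant positive eigenvalue σ_τ > 1 equal to its spectral radius. -/
theorem P_tau_perron_eigenvalue
    (τ : ℕ) (hτ : 1 ≤ τ)
    (T : Module.End ℝ (Polynomial.degreeLT ℝ (τ + 1)))
    (hT : ∀ p : Polynomial.degreeLT ℝ (τ + 1), ∀ x ∈ Set.Icc (0 : ℝ) 1,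
      ((T p : Polynomial ℝ)).eval x =
        (1 + x) ^ τ * ((p : Polynomial ℝ).eval (1 / (1 + x))
          + (p : Polynomial ℝ).eval (x / (1 + x)))) :
    ∃ σ : ℝ, 1 < σ ∧
      Module.End.HasEigenvalue T σ ∧
      Module.finrank ℝ (Module.End.eigenspace T σ) = 1 ∧
      (∀ μ : ℝ, Module.End.HasEigenvalue T μ → μ ≠ σ → |μ| < σ) ∧
      spectralRadius ℝ T = ENNReal.ofReal σ :=
  P_tau_perron_eigenvalue_general τ T hT
end

section
/- Let P_k act on continuous functions on [0,1] by P_k[f](x) = (1/2)(2 sin(πx/2))^{2k} f(x/2) + (1/2)(2 cos(πx/2))^{2k} f((x+1)/2), and U_{2k}[f](x) = S(x)^{2k}(f(1 - x/2) + f(x/2)) where S(x) = (2/√3) sin(πx/2). Then for all r ≥ 1 and f ∈ C([0,1]), P_k^r[f + f*](x) = (3^k/2)^r (U_{2k}^r[f](x) + U_{2k}^r[f](1-x)), where f*(t) = f(1-t). -/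
open Real

/-- With P_k[f](x) = (1/2)(2 sin(πx/2))^{2k} f(x/2) + (1/2)(2 cos(πx/2))^{2k} f((x+1)/2)
    and U_{2k}[f](x) = S(x)^{2k}(f(1-x/2) + f(x/2)), S(x) = (2/√3) sin(πx/2):
    P_k^r[f + f*](x) = (3^k/2)^r (U_{2k}^r[f](x) + U_{2k}^r[f](1-x)), f*(t) = f(1-t). -/
theorem desymmetrization_identity
    (k : ℕ) (hk : 1 ≤ k)
    (S : ℝ → ℝ) (hS : ∀ x, S x = 2 / Real.sqrt 3 * Real.sin (π * x / 2))
    (P U : (ℝ → ℝ) → (ℝ → ℝ))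
    (hP : ∀ f x, P f x = (1 / 2) * (2 * Real.sin (π * x / 2)) ^ (2 * k) * f (x / 2)
        + (1 / 2) * (2 * Real.cos (π * x / 2)) ^ (2 * k) * f ((x + 1) / 2))
    (hU : ∀ f x, U f x = S x ^ (2 * k) * (f (1 - x / 2) + f (x / 2))) :
    ∀ r : ℕ, 1 ≤ r → ∀ f : ℝ → ℝ, ContinuousOn f (Set.Icc 0 1) →
      ∀ x ∈ Set.Icc (0 : ℝ) 1,
        P^[r] (fun t => f t + f (1 - t)) x =
          ((3 : ℝ) ^ k / 2) ^ r * (U^[r] f x + U^[r] f (1 - x)) := by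
  have hsq : Real.sqrt 3 ^ 2 = 3 := Real.sq_sqrt (by norm_num)
  have h3k : ((3:ℝ)) ^ k ≠ 0 := by positivity
  have hp : ∀ t : ℝ, (2 / Real.sqrt 3 * t) ^ (2 * k) = (2 * t) ^ (2 * k) / 3 ^ k := by
    intro t
    rw [show (2:ℝ) / Real.sqrt 3 * t = (2 * t) / Real.sqrt 3 by ring, div_pow,
      pow_mul (Real.sqrt 3), hsq]
  have key : ∀ (g : ℝ → ℝ) (c : ℝ) (x : ℝ),
      P (fun t => c * (g t + g (1 - t))) x
        = c * ((3:ℝ) ^ k / 2) * (U g x + U g (1 - x)) := by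
    intro g c x
    rw [hP, hU, hU, hS, hS]
    have e1 : Real.sin (π * (1 - x) / 2) = Real.cos (π * x / 2) := by
      rw [show π * (1 - x) / 2 = π / 2 - π * x / 2 by ring, Real.sin_pi_div_two_sub]
    rw [e1, hp, hp]
    have e2 : (1:ℝ) - (1 - x) / 2 = (x + 1) / 2 := by ring
    have e3 : (1:ℝ) - (x + 1) / 2 = (1 - x) / 2 := by ring
    rw [e2, e3]
    field_simp
    ring
  intro r _ f _ x _
  have main : ∀ r : ℕ, ∀ x : ℝ,
      P^[r] (fun t => f t + f (1 - t)) x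
        = ((3:ℝ) ^ k / 2) ^ r * (U^[r] f x + U^[r] f (1 - x)) := by
    intro r
    induction r with
    | zero => intro x; simp
    | succ n ih =>
      intro x
      rw [Function.iterate_succ_apply' P]
      have hfun : P^[n] (fun t => f t + f (1 - t))
          = fun t => ((3:ℝ) ^ k / 2) ^ n * (U^[n] f t + U^[n] f (1 - t)) := funext ih
      rw [hfun, key (U^[n] f) (((3:ℝ) ^ k / 2) ^ n) x,
        ← Function.iterate_succ_apply' U]
      ring
  exact main r x
end
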